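/- Let cps be a constrained path schema over a finite alphabet Σ with segments p_1, …, p_k ∈ Σ*, loops l_1, …, l_k ∈ Σ^+ and constraint set D ⊆ ℕ^{k−1}, where D is presented in semilinear form by a finite set of base vectors B0 and period vectors P_1, …, P_α, all of whose components are at most M. Let ψ be an FO_Σ sentence of quantifier height q. Then L(cps) ∩ L(ψ) ≠ ∅ if and only if there exists n ∈ D with n_i ≤ M + (2^{q+1}+1)·α·M for every i ∈ {1,…,k−1} such that p_1 l_1^{n_1} ⋯ p_{k−1} l_{k−1}^{n_{k−1}} p_k l_k^ω ⊨ ψ. -/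

import Mathlib

/-!
Duplicator wins the `q`-round Ehrenfeucht–Fraïssé game on `u l^m v` and `u l^{m'} v` as soon as
`m, m' ≥ 2^{q+1}`. With `r` rounds left she keeps every pebbled pair of positions carrying the
same letter for a structural reason, and every two pebbled pairs at equal distances or at
distances both beyond `(2^{r+1} - 1)|l|`; the two ends of the loop block count as permanently
pebbled.

Pumping the loops of the schema one at a time, a witness `n = b + ∑ a_j P_j` can be replaced by
`b + ∑ min(a_j, 2^{q+1}+1) P_j`: its entries are at most `M + (2^{q+1}+1) α M`, and it differs
from `n` only in entries where both are at least `2^{q+1}`.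
-/

namespace Stmt7

variable {Γ : Type*}

/-- `m`-fold concatenation of a finite word. -/
def lpow (u : List Γ) : ℕ → List Γ
  | 0 => []
  | m + 1 => u ++ lpow u m

/-- Concatenation of a finite word with an ω-word. -/
def wcat (u : List Γ) (w : ℕ → Γ) : ℕ → Γ := fun n =>
  if h : n < u.length then u.get ⟨n, h⟩ else w (n - u.length)

/-- Infinite repetition of a nonempty finite word. -/
def womega (u : List Γ) (hu : u ≠ []) : ℕ → Γ := fun n =>
  u.get ⟨n % u.length, Nat.mod_lt _ (List.length_pos_iff.mpr hu)⟩

/-- The finite word `p 0 · (l 0)^(n 0) · ⋯ · p (i-1) · (l (i-1))^(n (i-1))`. -/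
def schemaPrefix (p l : ℕ → List Γ) (n : ℕ → ℕ) : ℕ → List Γ
  | 0 => []
  | i + 1 => schemaPrefix p l n i ++ (p i ++ lpow (l i) (n i))

/-- The ω-word `p_1 l_1^{n_1} ⋯ p_{k-1} l_{k-1}^{n_{k-1}} p_k l_k^ω`
(with `0`-based indexing of the segments `p` and loops `l`). -/
def schemaWord (k : ℕ) (p l : ℕ → List Γ) (n : ℕ → ℕ) (h : l (k - 1) ≠ []) : ℕ → Γ :=
  wcat (schemaPrefix p l n (k - 1) ++ p (k - 1)) (womega (l (k - 1)) h)

/-- Extension of a vector in `ℕ^d` to a function on all of `ℕ` (by `0`). -/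
def extFun {d : ℕ} (n : Fin d → ℕ) : ℕ → ℕ := fun i => if h : i < d then n ⟨i, h⟩ else 0

/-- The language of the constrained path schema with segments `p`, loops `l`
and constraint set `D ⊆ ℕ^(k-1)`. -/
def cpsLang (k : ℕ) (p l : ℕ → List Γ) (D : Set (Fin (k - 1) → ℕ))
    (h : l (k - 1) ≠ []) : Set (ℕ → Γ) :=
  {w | ∃ n ∈ D, w = schemaWord k p l (extFun n) h}

/-- Syntax of first-order logic `FO_Γ` over ω-words over `Γ`. -/
inductive FO (Γ : Type*) : Type _
  | letter : Γ → ℕ → FO Γ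
  | succ : ℕ → ℕ → FO Γ
  | lt : ℕ → ℕ → FO Γ
  | eq : ℕ → ℕ → FO Γ
  | not : FO Γ → FO Γ
  | and : FO Γ → FO Γ → FO Γ
  | ex : ℕ → FO Γ → FO Γ

/-- Satisfaction of an FO formula on an ω-word under an assignment of variables
to positions. -/
def FO.Sat (w : ℕ → Γ) : FO Γ → (ℕ → ℕ) → Prop
  | .letter a z, f => w (f z) = a
  | .succ z z', f => f z' = f z + 1
  | .lt z z', f => f z < f z'
  | .eq z z', f => f z = f z'
  | .not φ, f => ¬ FO.Sat w φ f
  | .and φ ψ, f => FO.Sat w φ f ∧ FO.Sat w ψ f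
  | .ex z φ, f => ∃ pos : ℕ, FO.Sat w φ (Function.update f z pos)

/-- Quantifier height: maximal nesting depth of `∃`. -/
def FO.qh : FO Γ → ℕ
  | .letter _ _ => 0
  | .succ _ _ => 0
  | .lt _ _ => 0
  | .eq _ _ => 0
  | .not φ => FO.qh φ
  | .and φ ψ => max (FO.qh φ) (FO.qh ψ)
  | .ex _ φ => FO.qh φ + 1

/-- Free variables of an FO formula. -/
def FO.free : FO Γ → Finset ℕ
  | .letter _ z => {z}
  | .succ z z' => {z, z'}
  | .lt z z' => {z, z'}
  | .eq z z' => {z, z'}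
  | .not φ => FO.free φ
  | .and φ ψ => FO.free φ ∪ FO.free ψ
  | .ex z φ => (FO.free φ).erase z

/-- Satisfaction of a sentence (the assignment is irrelevant, so we fix one). -/
def FO.SatS (w : ℕ → Γ) (φ : FO Γ) : Prop := FO.Sat w φ fun _ => 0

lemma modEq_of_add_eq {L x x' y y' : ℕ} (h : x + y' = x' + y) (hy : y ≡ y' [MOD L]) :
    x ≡ x' [MOD L] :=
  Nat.ModEq.add_right_cancel hy.symm (by rw [Nat.ModEq, h])

lemma exists_modEq_mem_Ioc {L : ℕ} (hL : 0 < L) (b x : ℕ) :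
    ∃ y, b < y ∧ y ≤ b + L ∧ y ≡ x [MOD L] := by
  set t := x + L * (b + 1) - (b + 1)
  have ht : b + 1 + t = x + L * (b + 1) := by
    have := Nat.le_mul_of_pos_left (b + 1) hL
    omega
  refine ⟨b + 1 + t % L, by omega, by have := Nat.mod_lt t hL; omega, ?_⟩
  calc b + 1 + t % L ≡ b + 1 + t [MOD L] := (Nat.mod_modEq t L).add_left _
    _ = x + L * (b + 1) := ht
    _ ≡ x [MOD L] := by simp [Nat.ModEq]

lemma exists_max_fst {S : Set (ℕ × ℕ)} {x : ℕ} (h : ∃ p ∈ S, p.1 ≤ x) :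
    ∃ p ∈ S, p.1 ≤ x ∧ ∀ q ∈ S, q.1 ≤ x → q.1 ≤ p.1 := by
  set T := Prod.fst '' {p ∈ S | p.1 ≤ x}
  have hT : BddAbove T := ⟨x, by rintro _ ⟨p, ⟨-, hp⟩, rfl⟩; exact hp⟩
  obtain ⟨p, hp⟩ := h
  obtain ⟨p, ⟨hpS, hpx⟩, hp⟩ := Nat.sSup_mem (s := T) ⟨p.1, p, hp, rfl⟩ hT
  exact ⟨p, hpS, hpx, fun q hq hqx => hp ▸ le_csSup hT ⟨q, ⟨hq, hqx⟩, rfl⟩⟩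

lemma exists_min_fst {S : Set (ℕ × ℕ)} {x : ℕ} (h : ∃ p ∈ S, x < p.1) :
    ∃ p ∈ S, x < p.1 ∧ ∀ q ∈ S, x < q.1 → p.1 ≤ q.1 := by
  set T := Prod.fst '' {p ∈ S | x < p.1}
  obtain ⟨p, hp⟩ := h
  obtain ⟨p, ⟨hpS, hpx⟩, hp⟩ := Nat.sInf_mem (s := T) ⟨p.1, p, hp, rfl⟩
  exact ⟨p, hpS, hpx, fun q hq hqx => hp ▸ Nat.sInf_le ⟨q, ⟨hq, hqx⟩, rfl⟩⟩

/-- With `a = |u|`, `L = |l|`, `N = a + m L` and `N' = a + m' L`, the positions `p.1` of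
`u l^m v` and `p.2` of `u l^{m'} v` lie at the same place of `u`, at the same phase of the loop
blocks, or at the same offset in `v`. -/
def Matched (a L N N' : ℕ) (p : ℕ × ℕ) : Prop :=
  (p.1 < a ∧ p.2 = p.1) ∨
  (a ≤ p.1 ∧ p.1 < N ∧ a ≤ p.2 ∧ p.2 < N' ∧ p.1 ≡ p.2 [MOD L]) ∨
  (N ≤ p.1 ∧ N' ≤ p.2 ∧ p.1 + N' = p.2 + N)

def Similar (c : ℕ) (p q : ℕ × ℕ) : Prop :=
  p.1 + q.2 = q.1 + p.2 ∨ (p.1 + c < q.1 ∧ p.2 + c < q.2) ∨ (q.1 + c < p.1 ∧ q.2 + c < p.2)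

namespace Similar

variable {c C : ℕ} {p q : ℕ × ℕ}

lemma refl (c : ℕ) (p : ℕ × ℕ) : Similar c p p := Or.inl rfl

lemma symm (h : Similar c p q) : Similar c q p := by
  unfold Similar at *; omega

lemma mono (hcC : c ≤ C) (h : Similar C p q) : Similar c p q := by
  unfold Similar at *; omega

lemma swap (h : Similar c p q) : Similar c p.swap q.swap := by
  unfold Similar at *; simp only [Prod.fst_swap, Prod.snd_swap]; omega

lemma atoms (hc : 0 < c) (h : Similar c p q) :
    (q.1 = p.1 + 1 ↔ q.2 = p.2 + 1) ∧ (p.1 < q.1 ↔ p.2 < q.2) ∧ (p.1 = q.1 ↔ p.2 = q.2) := by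
  unfold Similar at h; omega

lemma of_lower {x x' : ℕ} {y : ℕ × ℕ} (hcC : c ≤ C) (hpy : Similar C p y)
    (hxy : Similar c (x, x') y) (hp : p.1 ≤ y.1) (hy : y.1 ≤ x) :
    Similar c (x, x') p := by
  unfold Similar at *; omega

lemma of_upper {x x' : ℕ} {y : ℕ × ℕ} (hcC : c ≤ C) (hpy : Similar C p y)
    (hxy : Similar c (x, x') y) (hp : y.1 ≤ p.1) (hy : x < y.1) :
    Similar c (x, x') p := by
  unfold Similar at *; omega

end Similar

section Matched

variable {a L N N' c : ℕ} {p : ℕ × ℕ}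

lemma Matched.modEq (hNN' : N ≡ N' [MOD L]) (h : Matched a L N N' p) : p.1 ≡ p.2 [MOD L] := by
  rcases h with ⟨-, h⟩ | ⟨-, -, -, -, h⟩ | ⟨-, -, h⟩
  · rw [h]
  · exact h
  · exact modEq_of_add_eq h hNN'

lemma Matched.swap (h : Matched a L N N' p) : Matched a L N' N p.swap := by
  rcases h with ⟨h1, h2⟩ | ⟨h1, h2, h3, h4, h5⟩ | ⟨h1, h2, h3⟩
  · exact Or.inl ⟨by simpa [← h2] using h1, h2.symm⟩
  · exact Or.inr (Or.inl ⟨h3, h4, h1, h2, h5.symm⟩)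
  · exact Or.inr (Or.inr ⟨h2, h1, h3.symm⟩)

lemma exists_between_of_similar (hL : 0 < L) {x : ℕ} {y z : ℕ × ℕ}
    (hyz : Similar (2 * c + L) y z) (hy : y.1 ≡ y.2 [MOD L]) (hz : z.1 ≡ z.2 [MOD L])
    (hyx : y.1 ≤ x) (hxz : x < z.1) :
    ∃ x', y.2 ≤ x' ∧ x' < z.2 ∧ x ≡ x' [MOD L] ∧ Similar c (x, x') y ∧ Similar c (x, x') z := by
  unfold Similar at *
  by_cases hnear_y : y.1 + z.2 = z.1 + y.2 ∨ x ≤ y.1 + c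
  · obtain ⟨x', hx'⟩ : ∃ x', x + y.2 = x' + y.1 := ⟨x + y.2 - y.1, by omega⟩
    exact ⟨x', by omega, by omega, modEq_of_add_eq hx' hy, by omega, by omega⟩
  by_cases hnear_z : z.1 ≤ x + c
  · obtain ⟨x', hx'⟩ : ∃ x', x + z.2 = x' + z.1 := ⟨x + z.2 - z.1, by omega⟩
    exact ⟨x', by omega, by omega, modEq_of_add_eq hx' hz, by omega, by omega⟩
  obtain ⟨x', hlo, hhi, hx'⟩ := exists_modEq_mem_Ioc hL (y.2 + c) x
  exact ⟨x', by omega, by omega, hx'.symm, by omega, by omega⟩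

end Matched

/-- For `c = margin L r`, a position of the Ehrenfeucht–Fraïssé game from which Duplicator
survives `r` more rounds. -/
def Config (a L N N' c : ℕ) (S : Set (ℕ × ℕ)) : Prop :=
  (∀ p ∈ S, Matched a L N N' p) ∧ ∀ p ∈ S, ∀ q ∈ S, Similar c p q

def pebbles (a N N' : ℕ) (f f' : ℕ → ℕ) : Set (ℕ × ℕ) :=
  insert (a, a) (insert (N, N') (Set.range fun z => (f z, f' z)))

namespace Config

variable {a L N N' c C : ℕ} {p : ℕ × ℕ} {S T : Set (ℕ × ℕ)}

lemma mono (hcC : c ≤ C) (h : Config a L N N' C S) : Config a L N N' c S :=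
  ⟨h.1, fun p hp q hq => (h.2 p hp q hq).mono hcC⟩

lemma subset (h : Config a L N N' c S) (hTS : T ⊆ S) : Config a L N N' c T :=
  ⟨fun p hp => h.1 p (hTS hp), fun p hp q hq => h.2 p (hTS hp) q (hTS hq)⟩

lemma insert (h : Config a L N N' c S) (hp : Matched a L N N' p)
    (hpS : ∀ q ∈ S, Similar c p q) : Config a L N N' c (insert p S) := by
  refine ⟨Set.forall_mem_insert.2 ⟨hp, h.1⟩, ?_⟩
  rintro q (rfl | hq) r (rfl | hr)
  · exact .refl c _
  · exact hpS r hr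
  · exact (hpS q hq).symm
  · exact h.2 q hq r hr

lemma swap (h : Config a L N N' c S) : Config a L N' N c (Prod.swap ⁻¹' S) :=
  ⟨fun p hp => by simpa using (h.1 _ hp).swap,
    fun p hp q hq => by simpa using (h.2 _ hp _ hq).swap⟩

lemma extension_of_lt (h : Config a L N N' c S) (ha : (a, a) ∈ S) (haN : a ≤ N) {x : ℕ}
    (hx : x < a) : Matched a L N N' (x, x) ∧ ∀ p ∈ S, Similar c (x, x) p := by
  refine ⟨Or.inl ⟨hx, rfl⟩, fun p hp => ?_⟩
  have hpm := h.1 p hp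
  have hpa := h.2 p hp _ ha
  unfold Matched at hpm
  unfold Similar at hpa ⊢
  omega

lemma extension_of_ge (h : Config a L N N' c S) (hN : (N, N') ∈ S) (haN : a ≤ N) {x : ℕ}
    (hx : N ≤ x) :
    Matched a L N N' (x, x + N' - N) ∧ ∀ p ∈ S, Similar c (x, x + N' - N) p := by
  refine ⟨Or.inr (Or.inr ⟨hx, by omega, by omega⟩), fun p hp => ?_⟩
  have hpm := h.1 p hp
  have hpN := h.2 p hp _ hN
  unfold Matched at hpm
  unfold Similar at hpN ⊢
  omega

lemma exists_extension_of_mem_Ico (hL : 0 < L) (hNN' : N ≡ N' [MOD L])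
    (h : Config a L N N' (2 * c + L) S) (ha : (a, a) ∈ S) (hN : (N, N') ∈ S) {x : ℕ}
    (hax : a ≤ x) (hxN : x < N) :
    ∃ x', Matched a L N N' (x, x') ∧ ∀ p ∈ S, Similar c (x, x') p := by
  obtain ⟨y, hy, hyx, hymax⟩ := exists_max_fst ⟨(a, a), ha, hax⟩
  obtain ⟨z, hz, hxz, hzmin⟩ := exists_min_fst ⟨(N, N'), hN, hxN⟩
  have hay := hymax _ ha hax
  have hzN := hzmin _ hN hxN
  obtain ⟨x', hyx', hx'z, hxx', hsy, hsz⟩ := exists_between_of_similar hL (h.2 y hy z hz)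
    ((h.1 y hy).modEq hNN') ((h.1 z hz).modEq hNN') hyx hxz
  have hym := h.1 y hy
  have hzm := h.1 z hz
  unfold Matched at hym hzm
  refine ⟨x', Or.inr (Or.inl ⟨hax, hxN, by omega, by omega, hxx'⟩), fun p hp => ?_⟩
  rcases le_or_gt p.1 x with hpx | hxp
  · exact .of_lower (by omega) (h.2 p hp y hy) hsy (hymax p hp hpx) hyx
  · exact .of_upper (by omega) (h.2 p hp z hz) hsz (hzmin p hp hxp) hxz

lemma exists_extension (hL : 0 < L) (hNN' : N ≡ N' [MOD L]) (haN : a ≤ N)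
    (h : Config a L N N' (2 * c + L) S) (ha : (a, a) ∈ S) (hN : (N, N') ∈ S) (x : ℕ) :
    ∃ x', Matched a L N N' (x, x') ∧ ∀ p ∈ S, Similar c (x, x') p := by
  have hc := h.mono (c := c) (by omega)
  rcases lt_or_ge x a with hxa | hax
  · exact ⟨x, hc.extension_of_lt ha haN hxa⟩
  rcases lt_or_ge x N with hxN | hNx
  · exact h.exists_extension_of_mem_Ico hL hNN' ha hN hax hxN
  · exact ⟨_, hc.extension_of_ge hN haN hNx⟩

end Config

section Pebbles

variable {a N N' : ℕ} {f f' : ℕ → ℕ}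

lemma mem_pebbles (z : ℕ) : (f z, f' z) ∈ pebbles a N N' f f' :=
  Set.mem_insert_of_mem _ (Set.mem_insert_of_mem _ ⟨z, rfl⟩)

lemma pebbles_update_subset (z x x' : ℕ) :
    pebbles a N N' (Function.update f z x) (Function.update f' z x') ⊆
      insert (x, x') (pebbles a N N' f f') := by
  rintro _ (rfl | rfl | ⟨y, rfl⟩)
  · exact Set.mem_insert_of_mem _ (Set.mem_insert _ _)
  · exact Set.mem_insert_of_mem _ (Set.mem_insert_of_mem _ (Set.mem_insert _ _))
  · rcases eq_or_ne y z with rfl | hyz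
    · simp only [Function.update_self]; exact Set.mem_insert _ _
    · simp only [Function.update_of_ne hyz]; exact Set.mem_insert_of_mem _ (mem_pebbles y)

lemma preimage_swap_pebbles : Prod.swap ⁻¹' pebbles a N N' f f' = pebbles a N' N f' f := by
  ext ⟨x, y⟩
  simp [pebbles, and_comm]

end Pebbles

lemma Config.exists_update {a L N N' c : ℕ} {f f' : ℕ → ℕ} (hL : 0 < L)
    (hNN' : N ≡ N' [MOD L]) (haN : a ≤ N) (h : Config a L N N' (2 * c + L) (pebbles a N N' f f'))
    (z x : ℕ) : ∃ x', Config a L N N' c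
      (pebbles a N N' (Function.update f z x) (Function.update f' z x')) := by
  obtain ⟨x', hm, hs⟩ := h.exists_extension hL hNN' haN (Set.mem_insert _ _)
    (Set.mem_insert_of_mem _ (Set.mem_insert _ _)) x
  exact ⟨x', ((h.mono (by omega)).insert hm hs).subset (pebbles_update_subset z x x')⟩

/-- An answer inside the loop block needs distance `c` to both neighbouring pebbles and one period
`L` to fix its phase, whence `2 c + L`; in closed form `margin L r = (2^{r+1} - 1) L`. -/
def margin (L : ℕ) : ℕ → ℕ
  | 0 => L
  | r + 1 => 2 * margin L r + L

lemma le_margin (L r : ℕ) : L ≤ margin L r := by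
  cases r <;> simp only [margin] <;> omega

lemma margin_add_self (L r : ℕ) : margin L r + L = 2 ^ (r + 1) * L := by
  induction r with
  | zero => simp only [margin]; ring
  | succ r ih => rw [margin, pow_succ, mul_comm _ 2, mul_assoc, ← ih]; ring

lemma wcat_of_lt {u : List Γ} {v : ℕ → Γ} {n : ℕ} (h : n < u.length) :
    wcat u v n = u[n] := dif_pos h

lemma wcat_of_le {u : List Γ} {v : ℕ → Γ} {n : ℕ} (h : u.length ≤ n) :
    wcat u v n = v (n - u.length) := dif_neg (by omega)

lemma wcat_append (u w : List Γ) (v : ℕ → Γ) : wcat (u ++ w) v = wcat u (wcat w v) := by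
  funext n
  rcases lt_or_ge n u.length with h | h
  · rw [wcat_of_lt (by simp; omega), wcat_of_lt h, List.getElem_append_left h]
  rw [wcat_of_le h]
  rcases lt_or_ge n (u.length + w.length) with h' | h'
  · rw [wcat_of_lt (by simp; omega), wcat_of_lt (by omega), List.getElem_append_right h]
  · rw [wcat_of_le (by simp; omega), wcat_of_le (by omega), List.length_append]
    congr 1
    omega

lemma length_lpow (u : List Γ) (m : ℕ) : (lpow u m).length = m * u.length := by
  induction m with
  | zero => simp [lpow]
  | succ m ih => simp [lpow, ih]; ring

lemma getElem?_lpow (l : List Γ) {m i : ℕ} (h : i < m * l.length) :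
    (lpow l m)[i]? = l[i % l.length]? := by
  induction m generalizing i with
  | zero => simp at h
  | succ m ih =>
    rcases lt_or_ge i l.length with hi | hi
    · rw [lpow, List.getElem?_append_left hi, Nat.mod_eq_of_lt hi]
    · rw [lpow, List.getElem?_append_right hi, ih (by rw [Nat.succ_mul] at h; omega),
        ← Nat.mod_eq_sub_mod hi]

lemma wcat_lpow_eq_of_matched {u l : List Γ} (v : ℕ → Γ) {m m' : ℕ} {p : ℕ × ℕ}
    (h : Matched u.length l.length (u.length + m * l.length) (u.length + m' * l.length) p) :
    wcat (u ++ lpow l m) v p.1 = wcat (u ++ lpow l m') v p.2 := by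
  rw [wcat_append, wcat_append]
  rcases h with ⟨h1, h2⟩ | ⟨h1, h2, h3, h4, h5⟩ | ⟨h1, h2, h3⟩
  · rw [h2, wcat_of_lt h1, wcat_of_lt h1]
  · have hx : p.1 - u.length < (lpow l m).length := by rw [length_lpow]; omega
    have hx' : p.2 - u.length < (lpow l m').length := by rw [length_lpow]; omega
    have hphase : p.1 - u.length ≡ p.2 - u.length [MOD l.length] :=
      Nat.ModEq.add_right_cancel' u.length
        (by rwa [Nat.sub_add_cancel h1, Nat.sub_add_cancel h3])
    rw [wcat_of_le h1, wcat_of_le h3, wcat_of_lt hx, wcat_of_lt hx']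
    have := (getElem?_lpow l (m := m) (by omega)).trans
      (hphase ▸ (getElem?_lpow l (m := m') (i := p.2 - u.length) (by omega)).symm)
    rwa [List.getElem?_eq_getElem hx, List.getElem?_eq_getElem hx', Option.some_inj] at this
  · have hx : (lpow l m).length ≤ p.1 - u.length := by rw [length_lpow]; omega
    have hx' : (lpow l m').length ≤ p.2 - u.length := by rw [length_lpow]; omega
    rw [wcat_of_le (show u.length ≤ p.1 by omega), wcat_of_le (show u.length ≤ p.2 by omega),
      wcat_of_le hx, wcat_of_le hx', length_lpow, length_lpow]
    congr 1
    omega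

theorem sat_iff_of_config {u l : List Γ} (hl : l ≠ []) (v : ℕ → Γ) (φ : FO Γ) {m m' r : ℕ}
    {f f' : ℕ → ℕ} (hr : FO.qh φ ≤ r)
    (h : Config u.length l.length (u.length + m * l.length) (u.length + m' * l.length)
      (margin l.length r)
      (pebbles u.length (u.length + m * l.length) (u.length + m' * l.length) f f')) :
    FO.Sat (wcat (u ++ lpow l m) v) φ f ↔ FO.Sat (wcat (u ++ lpow l m') v) φ f' := by
  have hL : 0 < l.length := List.length_pos_iff.2 hl
  have hNN' (m m' : ℕ) : u.length + m * l.length ≡ u.length + m' * l.length [MOD l.length] := by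
    simp [Nat.ModEq]
  have hmargin (r : ℕ) : 0 < margin l.length r := hL.trans_le (le_margin ..)
  induction φ generalizing m m' r f f' with
  | letter c z => simp only [FO.Sat, wcat_lpow_eq_of_matched v (h.1 _ (mem_pebbles z))]
  | succ z z' => exact ((h.2 _ (mem_pebbles z) _ (mem_pebbles z')).atoms (hmargin r)).1
  | lt z z' => exact ((h.2 _ (mem_pebbles z) _ (mem_pebbles z')).atoms (hmargin r)).2.1
  | eq z z' => exact ((h.2 _ (mem_pebbles z) _ (mem_pebbles z')).atoms (hmargin r)).2.2
  | not φ ih => exact not_congr (ih hr h)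
  | and φ ψ ihφ ihψ =>
    simp only [FO.qh, max_le_iff] at hr
    exact and_congr (ihφ hr.1 h) (ihψ hr.2 h)
  | ex z φ ih =>
    obtain ⟨r, rfl⟩ : ∃ r', r = r' + 1 := ⟨r - 1, by simp only [FO.qh] at hr; omega⟩
    replace hr : FO.qh φ ≤ r := by simp only [FO.qh] at hr; omega
    rw [margin] at h
    constructor
    · rintro ⟨x, hx⟩
      obtain ⟨x', h'⟩ := h.exists_update hL (hNN' m m') (Nat.le_add_right ..) z x
      exact ⟨x', (ih hr h').1 hx⟩
    · rintro ⟨x', hx'⟩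
      obtain ⟨x, h'⟩ := (preimage_swap_pebbles ▸ h.swap).exists_update hL (hNN' m' m)
        (Nat.le_add_right ..) z x'
      exact ⟨x, (ih hr h').1 hx'⟩

lemma config_pebbles_const_zero {a L N N' c : ℕ} (hN : a + c < N) (hN' : a + c < N') :
    Config a L N N' c (pebbles a N N' (fun _ => 0) (fun _ => 0)) := by
  have hrange : Set.range (fun _ : ℕ => ((0 : ℕ), (0 : ℕ))) = {(0, 0)} := Set.range_const
  simp only [pebbles, hrange]
  refine ⟨?_, ?_⟩
  · rintro p (rfl | rfl | rfl)
    · exact Or.inr (Or.inl ⟨le_rfl, by omega, le_rfl, by omega, rfl⟩)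
    · exact Or.inr (Or.inr ⟨le_rfl, le_rfl, by omega⟩)
    · rcases Nat.eq_zero_or_pos a with ha | ha
      · exact Or.inr (Or.inl ⟨by omega, by omega, by omega, by omega, rfl⟩)
      · exact Or.inl ⟨ha, rfl⟩
  · rintro p (rfl | rfl | rfl) q (rfl | rfl | rfl) <;> unfold Similar <;> omega

theorem satS_pump_iff {u l : List Γ} (hl : l ≠ []) (v : ℕ → Γ) {q m m' : ℕ} (ψ : FO Γ)
    (hψ : FO.qh ψ ≤ q) (hm : 2 ^ (q + 1) ≤ m) (hm' : 2 ^ (q + 1) ≤ m') :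
    FO.SatS (wcat (u ++ lpow l m) v) ψ ↔ FO.SatS (wcat (u ++ lpow l m') v) ψ := by
  have hL : 0 < l.length := List.length_pos_iff.2 hl
  have hmargin {m : ℕ} (hm : 2 ^ (q + 1) ≤ m) : margin l.length q < m * l.length := by
    have := margin_add_self l.length q
    have := Nat.mul_le_mul_right l.length hm
    omega
  exact sat_iff_of_config hl v ψ hψ
    (config_pebbles_const_zero (by linarith [hmargin hm]) (by linarith [hmargin hm']))

lemma schemaPrefix_congr (p l : ℕ → List Γ) {n n' : ℕ → ℕ} {i : ℕ}
    (h : ∀ j < i, n j = n' j) : schemaPrefix p l n i = schemaPrefix p l n' i := by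
  induction i with
  | zero => rfl
  | succ i ih => rw [schemaPrefix, schemaPrefix, ih fun j hj => h j (by omega), h i (by omega)]

lemma schemaWord_congr (k : ℕ) (p l : ℕ → List Γ) {n n' : ℕ → ℕ} (h : ∀ j < k - 1, n j = n' j)
    (hl : l (k - 1) ≠ []) : schemaWord k p l n hl = schemaWord k p l n' hl := by
  rw [schemaWord, schemaWord, schemaPrefix_congr p l h]

lemma exists_schemaPrefix_update (p l : ℕ → List Γ) (n : ℕ → ℕ) {i j : ℕ} (hij : i < j) :
    ∃ R, ∀ m, schemaPrefix p l (Function.update n i m) j =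
      schemaPrefix p l n i ++ p i ++ lpow (l i) m ++ R := by
  induction j with
  | zero => omega
  | succ j ih =>
    rcases (Nat.lt_succ_iff.1 hij).eq_or_lt with rfl | hij
    · refine ⟨[], fun m => ?_⟩
      rw [schemaPrefix, schemaPrefix_congr p l fun j hj => Function.update_of_ne hj.ne _ _,
        Function.update_self]
      simp
    · obtain ⟨R, hR⟩ := ih hij
      refine ⟨R ++ (p j ++ lpow (l j) (n j)), fun m => ?_⟩
      rw [schemaPrefix, hR, Function.update_of_ne hij.ne']
      simp

lemma exists_schemaWord_update (k : ℕ) (p l : ℕ → List Γ) (n : ℕ → ℕ) (hl : l (k - 1) ≠ [])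
    {i : ℕ} (hi : i < k - 1) :
    ∃ (u : List Γ) (v : ℕ → Γ), ∀ m,
      schemaWord k p l (Function.update n i m) hl = wcat (u ++ lpow (l i) m) v := by
  obtain ⟨R, hR⟩ := exists_schemaPrefix_update p l n hi
  refine ⟨schemaPrefix p l n i ++ p i, wcat (R ++ p (k - 1)) (womega (l (k - 1)) hl),
    fun m => ?_⟩
  rw [schemaWord, hR, ← wcat_append]
  simp

lemma satS_schemaWord_update_iff {k : ℕ} {p l : ℕ → List Γ} (n : ℕ → ℕ) (hl : l (k - 1) ≠ [])
    {i : ℕ} (hi : i < k - 1) (hli : l i ≠ []) {q m m' : ℕ} {ψ : FO Γ} (hψ : FO.qh ψ ≤ q)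
    (hm : 2 ^ (q + 1) ≤ m) (hm' : 2 ^ (q + 1) ≤ m') :
    FO.SatS (schemaWord k p l (Function.update n i m) hl) ψ ↔
      FO.SatS (schemaWord k p l (Function.update n i m') hl) ψ := by
  obtain ⟨u, v, huv⟩ := exists_schemaWord_update k p l n hl hi
  rw [huv, huv]
  exact satS_pump_iff hli v ψ hψ hm hm'

theorem satS_schemaWord_iff {k : ℕ} {p l : ℕ → List Γ} (hl : ∀ i < k - 1, l i ≠ [])
    (hlast : l (k - 1) ≠ []) {q : ℕ} {ψ : FO Γ} (hψ : FO.qh ψ ≤ q) {n n' : ℕ → ℕ}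
    (hnn' : ∀ i < k - 1, n i = n' i ∨ (2 ^ (q + 1) ≤ n i ∧ 2 ^ (q + 1) ≤ n' i)) :
    FO.SatS (schemaWord k p l n hlast) ψ ↔ FO.SatS (schemaWord k p l n' hlast) ψ := by
  suffices ∀ t ≤ k - 1, ∀ n : ℕ → ℕ,
      (∀ i < k - 1, n i = n' i ∨ (2 ^ (q + 1) ≤ n i ∧ 2 ^ (q + 1) ≤ n' i)) →
      (∀ i < k - 1, t ≤ i → n i = n' i) →
      (FO.SatS (schemaWord k p l n hlast) ψ ↔ FO.SatS (schemaWord k p l n' hlast) ψ) from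
    this (k - 1) le_rfl n hnn' fun i hi hki => absurd hi (by omega)
  intro t
  induction t with
  | zero => exact fun _ n _ h => by rw [schemaWord_congr k p l fun i hi => h i hi (Nat.zero_le i)]
  | succ t ih =>
    intro ht n hn hagree
    refine Iff.trans ?_ (ih (by omega) (Function.update n t (n' t)) (fun i hi => ?_)
      fun i hi hti => ?_)
    · rcases hn t ht with heq | ⟨hbig, hbig'⟩
      · rw [← heq, Function.update_eq_self]
      · simpa only [Function.update_eq_self] using
          satS_schemaWord_update_iff n hlast ht (hl t ht) hψ hbig hbig'
    · rcases eq_or_ne i t with rfl | hit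
      · exact Or.inl (Function.update_self ..)
      · rw [Function.update_of_ne hit]
        exact hn i hi
    · rcases eq_or_ne i t with rfl | hit
      · exact Function.update_self ..
      · rw [Function.update_of_ne hit]
        exact hagree i hi (by omega)

lemma sum_min_mul_eq_or_le {ι : Type*} [Fintype ι] (A : ℕ) (a P : ι → ℕ) :
    ∑ j, min (a j) A * P j = ∑ j, a j * P j ∨ A ≤ ∑ j, min (a j) A * P j := by
  by_cases h : ∀ j, min (a j) A * P j = a j * P j
  · exact Or.inl (Finset.sum_congr rfl fun j _ => h j)
  obtain ⟨j, hj⟩ := not_forall.1 h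
  have hA : min (a j) A = A := min_eq_right (by by_contra! h; exact hj (by rw [min_eq_left h.le]))
  have hP : P j ≠ 0 := by rintro h0; exact hj (by rw [h0, mul_zero, mul_zero])
  refine Or.inr (le_trans ?_
    (Finset.single_le_sum (fun j _ => Nat.zero_le _) (Finset.mem_univ j)))
  rw [hA]
  exact Nat.le_mul_of_pos_right A (Nat.pos_of_ne_zero hP)

/-- Small-witness theorem for the intersection of a constrained path schema
(whose constraint set is presented in semilinear form with all components of
bases and periods at most `M`) with an FO sentence of quantifier height `q`. -/
theorem cps_fo_intersection {Γ : Type*}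
    (k : ℕ) (hk : 0 < k) (p l : ℕ → List Γ) (hl : ∀ i, i < k → l i ≠ [])
    (D : Set (Fin (k - 1) → ℕ)) (B0 : Finset (Fin (k - 1) → ℕ)) (α : ℕ)
    (P : Fin α → Fin (k - 1) → ℕ) (M : ℕ)
    (hD : D = {y | ∃ b ∈ B0, ∃ a : Fin α → ℕ, y = fun i => b i + ∑ j, a j * P j i})
    (hB0 : ∀ b ∈ B0, ∀ i, b i ≤ M) (hP : ∀ j i, P j i ≤ M)
    (ψ : FO Γ) (q : ℕ) (hq : FO.qh ψ = q) :
    (cpsLang k p l D (hl (k - 1) (by omega)) ∩ {w | FO.SatS w ψ}).Nonempty ↔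
      ∃ n ∈ D, (∀ i, n i ≤ M + (2 ^ (q + 1) + 1) * α * M) ∧
        FO.SatS (schemaWord k p l (extFun n) (hl (k - 1) (by omega))) ψ := by
  subst hD
  constructor
  · rintro ⟨_, ⟨_, ⟨b, hb, a, rfl⟩, rfl⟩, hsat⟩
    set A := 2 ^ (q + 1) + 1
    refine ⟨fun i => b i + ∑ j, min (a j) A * P j i, ⟨b, hb, fun j => min (a j) A, rfl⟩,
      fun i => ?_, ?_⟩
    · have hsum : ∑ j, min (a j) A * P j i ≤ α * (A * M) := by
        simpa using Finset.sum_le_card_nsmul Finset.univ _ (A * M)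
          fun j _ => Nat.mul_le_mul (min_le_right _ _) (hP j i)
      have := hB0 b hb i
      calc b i + ∑ j, min (a j) A * P j i ≤ M + α * (A * M) := by omega
        _ = _ := by ring
    · refine (satS_schemaWord_iff (fun i hi => hl i (by omega)) _ hq.le fun i hi => ?_).1 hsat
      simp only [extFun, dif_pos hi]
      have hle : ∑ j, min (a j) A * P j ⟨i, hi⟩ ≤ ∑ j, a j * P j ⟨i, hi⟩ :=
        Finset.sum_le_sum fun j _ => Nat.mul_le_mul_right _ (min_le_left _ _)
      rcases sum_min_mul_eq_or_le A a (fun j => P j ⟨i, hi⟩) with h | h <;> omega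
  · rintro ⟨n, hn, -, hsat⟩
    exact ⟨_, ⟨n, hn, rfl⟩, hsat⟩

end Stmt7
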